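/- Consider the scalar ODE x'(t) = (1/8)·(2π²)^{2/3}·x(t)^{5/3}·(−3x(t)² + 5x(t) − 2) on (0, ∞). The constant functions x ≡ 2/3 and x ≡ 1 are solutions, and for every initial value x(0) = ε with ε > 2/3 the maximal solution is defined on all of [0, ∞), remains in the interval between ε and 1 (inclusive), and satisfies x(t) → 1 as t → ∞. -/

import Mathlib

open Real Filter Set Topology
open scoped ENNReal

/-- The right-hand side of the scalar ODE obtained by restricting the normalized
spinor-flow system (case `aμ = 1`) to the curve of volume-one Berger metrics. -/
noncomputable def f1 (x : ℝ) : ℝ :=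
  (1/8) * (2 * π^2) ^ ((2:ℝ)/3) * x ^ ((5:ℝ)/3) * (-3*x^2 + 5*x - 2)

/-- `x` is a solution of `x' = f1(x)` on `J`, with values in `(0, ∞)`. -/
def IsSolutionOn (x : ℝ → ℝ) (J : Set ℝ) : Prop :=
  ∀ t ∈ J, 0 < x t ∧ HasDerivAt x (f1 (x t)) t

/-- The interval `[0, T)` as a subset of `ℝ`, where `T ∈ (0,∞]`. -/
def domainUpTo (T : ℝ≥0∞) : Set ℝ := {t : ℝ | 0 ≤ t ∧ ENNReal.ofReal t < T}

/-- `x` is a maximal solution on `[0, T)`: it is a solution there and cannot be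
extended to a solution on a strictly larger interval to the right. -/
def IsMaxSolution (x : ℝ → ℝ) (T : ℝ≥0∞) : Prop :=
  0 < T ∧ IsSolutionOn x (domainUpTo T) ∧
    ¬ ∃ (T' : ℝ≥0∞) (x' : ℝ → ℝ), T < T' ∧ IsSolutionOn x' (domainUpTo T') ∧
        ∀ t ∈ domainUpTo T, x' t = x t

/-! `f1` is `C¹` on all of `ℝ` (the exponent `5/3` exceeds `1`, so even the `rpow` convention at
negative bases is harmless), hence solutions are unique and cannot cross the equilibria `2/3` and
`1`. A solution starting above `2/3` is therefore trapped between its initial value and `1`, where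
`f1` has the sign of `1 - x`, so it moves monotonically towards `1`. Having a bounded derivative,
it converges at any finite end time, and the local solution through the limit extends it: maximal
solutions are global. The limit at infinity is a zero of `f1` (mean value theorem on `[n, n + 1]`),
and the only one in reach is `1`. -/

theorem exists_tendsto_nhdsLT_of_hasDerivAt_of_norm_le {x x' : ℝ → ℝ} {a b C : ℝ}
    (hab : a < b) (hx : ∀ t ∈ Ico a b, HasDerivAt x (x' t) t) (hC : ∀ t ∈ Ico a b, ‖x' t‖ ≤ C) :
    ∃ L, Tendsto x (𝓝[<] b) (𝓝 L) := by
  have hlip : LipschitzOnWith C.toNNReal x (Ico a b) :=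
    (convex_Ico a b).lipschitzOnWith_of_nnnorm_hasDerivWithin_le
      (fun t ht => (hx t ht).hasDerivWithinAt) fun t ht => by
        rw [← NNReal.coe_le_coe, coe_nnnorm]
        exact (hC t ht).trans (le_coe_toNNReal C)
  obtain ⟨g, hg, hgx⟩ := hlip.extend_real
  refine ⟨g b, (hg.continuous.tendsto b |>.mono_left nhdsWithin_le_nhds).congr' ?_⟩
  filter_upwards [Ico_mem_nhdsLT hab] with t ht using (hgx ht).symm

theorem eq_zero_of_tendsto_of_hasDerivAt {f f' : ℝ → ℝ} {L l : ℝ}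
    (hf : ∀ᶠ t in atTop, HasDerivAt f (f' t) t) (hfL : Tendsto f atTop (𝓝 L))
    (hf' : Tendsto f' atTop (𝓝 l)) : l = 0 := by
  obtain ⟨a, ha⟩ := eventually_atTop.1 hf
  have hslope : ∀ n : ℕ, ∃ ξ ∈ Ioo (a + n) (a + n + 1), f' ξ = f (a + n + 1) - f (a + n) :=
    fun n => by
      have hderiv : ∀ t ∈ Icc (a + n) (a + n + 1), HasDerivAt f (f' t) t := fun t ht =>
        ha t (by linarith [ht.1, n.cast_nonneg (α := ℝ)])
      obtain ⟨ξ, hξ, h⟩ := exists_hasDerivAt_eq_slope f f' (lt_add_one (a + n))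
        (fun t ht => (hderiv t ht).continuousAt.continuousWithinAt)
        (fun t ht => hderiv t (Ioo_subset_Icc_self ht))
      exact ⟨ξ, hξ, by rw [h]; ring⟩
  choose ξ hξmem hξ using hslope
  have hshift : Tendsto (fun n : ℕ => a + n) atTop atTop :=
    tendsto_atTop_add_const_left _ _ tendsto_natCast_atTop_atTop
  have hξtop : Tendsto ξ atTop atTop := tendsto_atTop_mono (fun n => (hξmem n).1.le) hshift
  have hdiff : Tendsto (fun n => f' (ξ n)) atTop (𝓝 (L - L)) := by
    simp_rw [hξ]
    exact (hfL.comp (tendsto_atTop_add_const_right _ 1 hshift)).sub (hfL.comp hshift)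
  rw [sub_self] at hdiff
  exact tendsto_nhds_unique (hf'.comp hξtop) hdiff

theorem MonotoneOn.exists_tendsto_atTop {ι β : Type*} [LinearOrder ι]
    [ConditionallyCompleteLinearOrder β] [TopologicalSpace β] [OrderTopology β]
    {f : ι → β} {a : ι}
    (hf : MonotoneOn f (Ici a)) (hb : BddAbove (f '' Ici a)) : ∃ L, Tendsto f atTop (𝓝 L) := by
  have hmono : Monotone fun t => f (max a t) := fun s t hst =>
    hf (le_max_left a s) (le_max_left a t) (max_le_max le_rfl hst)
  have hbdd : BddAbove (range fun t => f (max a t)) :=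
    hb.mono (range_subset_iff.2 fun t => mem_image_of_mem f (le_max_left a t))
  refine ⟨_, (tendsto_atTop_ciSup hmono hbdd).congr' ?_⟩
  filter_upwards [eventually_ge_atTop a] with t ht
  rw [max_eq_right ht]

theorem AntitoneOn.exists_tendsto_atTop {ι β : Type*} [LinearOrder ι]
    [ConditionallyCompleteLinearOrder β] [TopologicalSpace β] [OrderTopology β]
    {f : ι → β} {a : ι}
    (hf : AntitoneOn f (Ici a)) (hb : BddBelow (f '' Ici a)) : ∃ L, Tendsto f atTop (𝓝 L) :=
  MonotoneOn.exists_tendsto_atTop (β := βᵒᵈ) hf.dual_right hb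

section AutonomousODE

variable {v x : ℝ → ℝ} {a b c L : ℝ}

theorem ODE_solution_eq_equilibrium (hv : LocallyLipschitz v) (hc : v c = 0)
    (hx : ∀ t ∈ Icc a b, HasDerivAt x (v (x t)) t) (ha : x a = c) :
    ∀ t ∈ Icc a b, x t = c := by
  intro t ht
  have hcont : ContinuousOn x (Icc a b) := fun t ht =>
    (hx t ht).continuousAt.continuousWithinAt
  obtain ⟨K, hK⟩ := hv.locallyLipschitzOn.exists_lipschitzOnWith_of_compact
    (isCompact_Icc.image_of_continuousOn hcont)
  have hc_mem : c ∈ x '' Icc a b := ⟨a, left_mem_Icc.2 (ht.1.trans ht.2), ha⟩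
  exact ODE_solution_unique_of_mem_Icc_right (v := fun _ => v) (s := fun _ => x '' Icc a b)
    (fun _ _ => hK) hcont (fun t ht => (hx t (Ico_subset_Icc_self ht)).hasDerivWithinAt)
    (fun t ht => mem_image_of_mem x (Ico_subset_Icc_self ht)) continuousOn_const
    (fun t _ => by simpa [hc] using hasDerivWithinAt_const t (Ici t) c) (fun _ _ => hc_mem)
    ha ht

theorem ODE_solution_le_equilibrium (hv : LocallyLipschitz v) (hc : v c = 0)
    (hx : ∀ t ∈ Icc a b, HasDerivAt x (v (x t)) t) (ha : x a ≤ c) :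
    ∀ t ∈ Icc a b, x t ≤ c := by
  intro t ht
  by_contra! hlt
  have hcont : ContinuousOn x (Icc a t) := fun s hs =>
    (hx s ⟨hs.1, hs.2.trans ht.2⟩).continuousAt.continuousWithinAt
  obtain ⟨s, hs, hxs⟩ := intermediate_value_Icc ht.1 hcont ⟨ha, hlt.le⟩
  exact hlt.ne' (ODE_solution_eq_equilibrium hv hc (a := s) (b := t)
    (fun r hr => hx r ⟨hs.1.trans hr.1, hr.2.trans ht.2⟩) hxs t ⟨hs.2, le_rfl⟩)

theorem ODE_equilibrium_le_solution (hv : LocallyLipschitz v) (hc : v c = 0)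
    (hx : ∀ t ∈ Icc a b, HasDerivAt x (v (x t)) t) (ha : c ≤ x a) :
    ∀ t ∈ Icc a b, c ≤ x t := by
  intro t ht
  by_contra! hlt
  have hcont : ContinuousOn x (Icc a t) := fun s hs =>
    (hx s ⟨hs.1, hs.2.trans ht.2⟩).continuousAt.continuousWithinAt
  obtain ⟨s, hs, hxs⟩ := intermediate_value_Icc' ht.1 hcont ⟨hlt.le, ha⟩
  exact hlt.ne (ODE_solution_eq_equilibrium hv hc (a := s) (b := t)
    (fun r hr => hx r ⟨hs.1.trans hr.1, hr.2.trans ht.2⟩) hxs t ⟨hs.2, le_rfl⟩)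

theorem ODE_hasDerivWithinAt_Iic_of_tendsto (hv : ContinuousAt v L) (hab : a < b)
    (hx : ∀ t ∈ Ioo a b, HasDerivAt x (v (x t)) t) (hlim : Tendsto x (𝓝[<] b) (𝓝 L))
    (hxb : x b = L) : HasDerivWithinAt x (v L) (Iic b) b := by
  have hmem : Ioo a b ∈ 𝓝[<] b := Ioo_mem_nhdsLT hab
  refine hasDerivWithinAt_Iic_of_tendsto_deriv (s := Ioo a b)
    (fun t ht => (hx t ht).differentiableAt.differentiableWithinAt) ?_ hmem ?_
  · rw [ContinuousWithinAt, hxb]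
    exact hlim.mono_left (nhdsWithin_mono _ Ioo_subset_Iio_self)
  · refine (hv.tendsto.comp hlim).congr' ?_
    filter_upwards [hmem] with t ht using (hx t ht).deriv.symm

theorem ODE_exists_extension_of_tendsto (hv : ContDiffAt ℝ 1 v L) (hab : a < b)
    (hx : ∀ t ∈ Ico a b, HasDerivAt x (v (x t)) t) (hlim : Tendsto x (𝓝[<] b) (𝓝 L)) :
    ∃ δ > 0, ∃ y : ℝ → ℝ, (∀ t ∈ Ico a (b + δ), HasDerivAt y (v (y t)) t) ∧
      EqOn y x (Ico a b) := by
  obtain ⟨z, hzb, δ, hδ, hz⟩ :=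
    hv.exists_forall_mem_closedBall_exists_eq_forall_mem_Ioo_hasDerivAt₀ b
  set y : ℝ → ℝ := fun t => if t < b then x t else z t with hy
  have hyb : y b = L := by simp [hy, hzb]
  have hy_lt : ∀ t ∈ Ico a b, HasDerivAt y (v (y t)) t := fun t ht => by
    have hyx : y =ᶠ[𝓝 t] x := by
      filter_upwards [Iio_mem_nhds ht.2] with s hs using if_pos hs
    simpa only [hyx.eq_of_nhds] using (hx t ht).congr_of_eventuallyEq hyx
  have hy_gt : ∀ t ∈ Ioo b (b + δ), HasDerivAt y (v (y t)) t := fun t ht => by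
    have hyz : y =ᶠ[𝓝 t] z := by
      filter_upwards [Ioi_mem_nhds ht.1] with s hs using if_neg hs.not_gt
    simpa only [hyz.eq_of_nhds] using
      (hz t ⟨by linarith [ht.1], ht.2⟩).congr_of_eventuallyEq hyz
  have hleft : HasDerivWithinAt y (v L) (Iic b) b :=
    ODE_hasDerivWithinAt_Iic_of_tendsto hv.continuousAt hab
      (fun t ht => hy_lt t (Ioo_subset_Ico_self ht))
      (hlim.congr' (eventually_nhdsWithin_of_forall fun t ht => (if_pos ht).symm)) hyb
  have hright : HasDerivWithinAt y (v L) (Ici b) b := by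
    have := (hz b ⟨by linarith, by linarith⟩).hasDerivWithinAt (s := Ici b)
    rw [hzb] at this
    exact this.congr (fun t ht => if_neg (not_lt.2 ht)) (by rw [hyb, hzb])
  refine ⟨δ, hδ, y, fun t ht => ?_, fun t ht => if_pos ht.2⟩
  rcases lt_trichotomy t b with h | rfl | h
  · exact hy_lt t ⟨ht.1, h⟩
  · rw [hyb]
    simpa using hleft.union hright
  · exact hy_gt t ⟨h, ht.2⟩

end AutonomousODE

theorem contDiff_f1 : ContDiff ℝ 1 f1 := by
  have hpow : ContDiff ℝ 1 fun y : ℝ => y ^ ((5:ℝ)/3) :=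
    Real.contDiff_rpow_const_of_le (by norm_num)
  unfold f1
  fun_prop

theorem locallyLipschitz_f1 : LocallyLipschitz f1 := contDiff_f1.locallyLipschitz

theorem f1_prefactor_pos {y : ℝ} (hy : 0 < y) :
    0 < 1/8 * (2 * π^2) ^ ((2:ℝ)/3) * y ^ ((5:ℝ)/3) := by
  have := Real.pi_pos
  positivity

theorem f1_two_thirds : f1 (2/3) = 0 := by
  unfold f1; norm_num

theorem f1_one : f1 1 = 0 := by
  unfold f1; norm_num

theorem f1_nonneg {y : ℝ} (hy : y ∈ Icc (2/3) 1) : 0 ≤ f1 y :=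
  mul_nonneg (f1_prefactor_pos (by linarith [hy.1])).le (by nlinarith [hy.1, hy.2])

theorem f1_nonpos {y : ℝ} (hy : 1 ≤ y) : f1 y ≤ 0 :=
  mul_nonpos_of_nonneg_of_nonpos (f1_prefactor_pos (by linarith)).le (by nlinarith)

theorem eq_one_of_f1_eq_zero {y : ℝ} (hy : 2/3 < y) (h : f1 y = 0) : y = 1 := by
  have hpoly : (3 * y - 2) * (y - 1) = 0 := by
    have := (mul_eq_zero.1 h).resolve_left (f1_prefactor_pos (by linarith)).ne'
    linarith
  rcases mul_eq_zero.1 hpoly with h | h <;> linarith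

theorem isSolutionOn_const {c : ℝ} (hc : 0 < c) (hfc : f1 c = 0) (J : Set ℝ) :
    IsSolutionOn (fun _ => c) J :=
  fun t _ => ⟨hc, by simpa [hfc] using hasDerivAt_const t c⟩

theorem two_thirds_lt_of_mem_uIcc {y z : ℝ} (hz : 2/3 < z) (hy : y ∈ uIcc z 1) : 2/3 < y :=
  (lt_min hz (by norm_num)).trans_le hy.1

section F1Solution

variable {x : ℝ → ℝ} {a b : ℝ}

theorem f1_solution_monotoneOn (hx : ∀ t ∈ Icc a b, HasDerivAt x (f1 (x t)) t)
    (ha : x a ∈ Icc (2/3) 1) : MonotoneOn x (Icc a b) ∧ ∀ t ∈ Icc a b, x t ≤ 1 := by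
  have hlo := ODE_equilibrium_le_solution locallyLipschitz_f1 f1_two_thirds hx ha.1
  have hhi := ODE_solution_le_equilibrium locallyLipschitz_f1 f1_one hx ha.2
  refine ⟨monotoneOn_of_hasDerivWithinAt_nonneg (convex_Icc a b)
    (fun t ht => (hx t ht).continuousAt.continuousWithinAt)
    (fun t ht => (hx t (interior_subset ht)).hasDerivWithinAt)
    (fun t ht => f1_nonneg ⟨hlo t (interior_subset ht), hhi t (interior_subset ht)⟩), hhi⟩

theorem f1_solution_antitoneOn (hx : ∀ t ∈ Icc a b, HasDerivAt x (f1 (x t)) t)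
    (ha : 1 ≤ x a) : AntitoneOn x (Icc a b) ∧ ∀ t ∈ Icc a b, 1 ≤ x t := by
  have hlo := ODE_equilibrium_le_solution locallyLipschitz_f1 f1_one hx ha
  refine ⟨antitoneOn_of_hasDerivWithinAt_nonpos (convex_Icc a b)
    (fun t ht => (hx t ht).continuousAt.continuousWithinAt)
    (fun t ht => (hx t (interior_subset ht)).hasDerivWithinAt)
    (fun t ht => f1_nonpos (hlo t (interior_subset ht))), hlo⟩

theorem f1_solution_mem_uIcc (hx : ∀ t ∈ Icc a b, HasDerivAt x (f1 (x t)) t)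
    (ha : 2/3 ≤ x a) : ∀ t ∈ Icc a b, x t ∈ uIcc (x a) 1 := by
  intro t ht
  have hat : a ∈ Icc a b := left_mem_Icc.2 (ht.1.trans ht.2)
  rcases le_total (x a) 1 with h | h
  · obtain ⟨hmono, hle⟩ := f1_solution_monotoneOn hx ⟨ha, h⟩
    exact uIcc_of_le h ▸ ⟨hmono hat ht ht.1, hle t ht⟩
  · obtain ⟨hanti, hge⟩ := f1_solution_antitoneOn hx h
    exact uIcc_of_ge h ▸ ⟨hge t ht, hanti hat ht ht.1⟩

theorem f1_solution_tendsto_one (hx : ∀ t ∈ Ici a, HasDerivAt x (f1 (x t)) t)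
    (ha : 2/3 < x a) : Tendsto x atTop (𝓝 1) := by
  have hIcc : ∀ t, ∀ s ∈ Icc a t, HasDerivAt x (f1 (x s)) s := fun _ s hs => hx s hs.1
  have hmem : ∀ t ∈ Ici a, x t ∈ uIcc (x a) 1 := fun t ht =>
    f1_solution_mem_uIcc (hIcc t) ha.le t ⟨ht, le_rfl⟩
  obtain ⟨L, hL⟩ : ∃ L, Tendsto x atTop (𝓝 L) := by
    rcases le_total (x a) 1 with h | h
    · have hmono t := f1_solution_monotoneOn (hIcc t) ⟨ha.le, h⟩
      refine MonotoneOn.exists_tendsto_atTop (a := a)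
        (fun s hs t ht hst => (hmono t).1 ⟨hs, hst⟩ ⟨ht, le_rfl⟩ hst) ⟨1, ?_⟩
      rintro _ ⟨t, ht, rfl⟩
      exact (hmono t).2 t ⟨ht, le_rfl⟩
    · have hanti t := f1_solution_antitoneOn (hIcc t) h
      refine AntitoneOn.exists_tendsto_atTop (a := a)
        (fun s hs t ht hst => (hanti t).1 ⟨hs, hst⟩ ⟨ht, le_rfl⟩ hst) ⟨1, ?_⟩
      rintro _ ⟨t, ht, rfl⟩
      exact (hanti t).2 t ⟨ht, le_rfl⟩
  have hLmem : L ∈ uIcc (x a) 1 :=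
    isClosed_Icc.mem_of_tendsto hL ((eventually_ge_atTop a).mono hmem)
  have hfL : f1 L = 0 :=
    eq_zero_of_tendsto_of_hasDerivAt ((eventually_ge_atTop a).mono hx) hL
      ((contDiff_f1.continuous.tendsto L).comp hL)
  rwa [eq_one_of_f1_eq_zero (two_thirds_lt_of_mem_uIcc ha hLmem) hfL] at hL

end F1Solution

theorem domainUpTo_ofReal (b : ℝ) : domainUpTo (ENNReal.ofReal b) = Ico 0 b := by
  ext t
  exact and_congr_right fun ht => ENNReal.ofReal_lt_ofReal_iff_of_nonneg ht

theorem domainUpTo_top : domainUpTo ⊤ = Ici 0 := by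
  ext t
  simp [domainUpTo]

theorem IsMaxSolution.eq_top {x : ℝ → ℝ} {T : ℝ≥0∞} (hmax : IsMaxSolution x T)
    (h0 : 2/3 < x 0) : T = ⊤ := by
  obtain ⟨hT0, hsol, hnoext⟩ := hmax
  by_contra hT
  set b := T.toReal
  have hb : 0 < b := ENNReal.toReal_pos hT0.ne' hT
  rw [← ENNReal.ofReal_toReal hT, domainUpTo_ofReal] at hsol
  have hx : ∀ t ∈ Ico 0 b, HasDerivAt x (f1 (x t)) t := fun t ht => (hsol t ht).2
  obtain ⟨C, hC⟩ := isCompact_uIcc.exists_bound_of_continuousOn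
    (contDiff_f1.continuous.continuousOn (s := uIcc (x 0) 1))
  have hbound : ∀ t ∈ Ico 0 b, ‖f1 (x t)‖ ≤ C := fun t ht =>
    hC _ (f1_solution_mem_uIcc (fun s hs => hx s ⟨hs.1, hs.2.trans_lt ht.2⟩) h0.le t ⟨ht.1, le_rfl⟩)
  obtain ⟨L, hL⟩ := exists_tendsto_nhdsLT_of_hasDerivAt_of_norm_le hb hx hbound
  obtain ⟨δ, hδ, y, hy, hyx⟩ :=
    ODE_exists_extension_of_tendsto contDiff_f1.contDiffAt hb hx hL
  have hy0 : y 0 = x 0 := hyx ⟨le_rfl, hb⟩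
  refine hnoext ⟨ENNReal.ofReal (b + δ), y, ?_, ?_, ?_⟩
  · rw [← ENNReal.ofReal_toReal hT]
    exact (ENNReal.ofReal_lt_ofReal_iff (by linarith)).2 (by linarith)
  · rw [domainUpTo_ofReal]
    intro t ht
    have hmem := f1_solution_mem_uIcc (fun s hs => hy s ⟨hs.1, hs.2.trans_lt ht.2⟩)
      (hy0 ▸ h0.le) t ⟨ht.1, le_rfl⟩
    exact ⟨by linarith [two_thirds_lt_of_mem_uIcc (hy0 ▸ h0) hmem], hy t ht⟩
  · rw [← ENNReal.ofReal_toReal hT, domainUpTo_ofReal]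
    exact hyx

/-- For the scalar ODE `x' = (1/8)(2π²)^(2/3) x^(5/3)(-3x² + 5x - 2)` on `(0, ∞)`:
the constants `2/3` and `1` are solutions, and every maximal solution with initial
value `ε > 2/3` exists for all time, stays in the closed interval between `ε` and `1`,
and converges to `1`. -/
theorem scalar_ode_amu_one :
    IsSolutionOn (fun _ => (2:ℝ)/3) Set.univ ∧
    IsSolutionOn (fun _ => (1:ℝ)) Set.univ ∧
    ∀ ε : ℝ, 2/3 < ε → ∀ (x : ℝ → ℝ) (T : ℝ≥0∞), IsMaxSolution x T → x 0 = ε →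
      T = ⊤ ∧ (∀ t : ℝ, 0 ≤ t → x t ∈ Set.uIcc ε 1) ∧ Tendsto x atTop (𝓝 1) := by
  refine ⟨isSolutionOn_const (by norm_num) f1_two_thirds _,
    isSolutionOn_const one_pos f1_one _, ?_⟩
  rintro ε hε x T hmax rfl
  obtain rfl := hmax.eq_top hε
  have hx : ∀ t ∈ Ici 0, HasDerivAt x (f1 (x t)) t := fun t ht =>
    (hmax.2.1 t (domainUpTo_top ▸ ht)).2
  exact ⟨rfl, fun t ht => f1_solution_mem_uIcc (fun s hs => hx s hs.1) hε.le t ⟨ht, le_rfl⟩,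
    f1_solution_tendsto_one hx hε⟩
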